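/- Let (f, P_1) be realized by a dominant-strategy, individually rational, no-negative-transfers mechanism over additive valuations, where f welfare-approximates strictly better than min{m,n}, with k = max{m,n}. On the profile where bidder 1 has the additive valuation v_1^{e1,big} (value 3k⁴ for item e_1, 0 otherwise), bidder 2 has v_2^{e1,big} (value 3k⁴ for e_1, 0 otherwise), and each other bidder i has v_i^{ei,one} (value 1 for e_i, 0 otherwise), bidder 1 either wins a bundle not containing e_1 and pays 0, or wins a bundle containing e_1 and pays at least 2k³ + k². -/
import Mathlib


/-- The additive valuation with per-item values `v`: `val(S) = Σ_{j ∈ S} v j`. -/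
noncomputable def addVal {m : ℕ} (v : Fin m → NNReal) (X : Finset (Fin m)) : ℝ :=
  ∑ j ∈ X, (v j : ℝ)

/-- The item desired by bidder `i`: item `e_i` for `i ≤ m`, and item `e_m` for `i > m`. -/
def eIdx {n : ℕ} (m : ℕ) (hm : 0 < m) (i : Fin n) : Fin m :=
  ⟨min i (m - 1), by omega⟩

/-- The additive valuation with value `1` for item `e` and `0` elsewhere. -/
noncomputable def oneVal {m : ℕ} (e : Fin m) : Fin m → NNReal :=
  fun x => if x = e then 1 else 0

lemma addVal_single {m : ℕ} (e : Fin m) (C : NNReal) (S : Finset (Fin m)) :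
    addVal (fun x => if x = e then C else 0) S = if e ∈ S then (C : ℝ) else 0 := by
  unfold addVal
  rw [← Finset.sum_ite_eq' S e (fun _ => (C : ℝ))]
  refine Finset.sum_congr rfl fun x _ => ?_
  by_cases h : x = e <;> simp [h]

lemma addVal_oneVal_le {m : ℕ} (e : Fin m) (S : Finset (Fin m)) :
    addVal (oneVal e) S ≤ 1 := by
  unfold oneVal
  rw [addVal_single]
  split <;> norm_num

lemma addVal_nonneg {m : ℕ} (v : Fin m → NNReal) (S : Finset (Fin m)) :
    0 ≤ addVal v S := by
  unfold addVal
  positivity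

/-- Lemma 4, part 2: Let `(f, P₁)` be realized by a dominant-strategy,
individually rational, no-negative-transfers mechanism over additive valuations where `f`
approximates welfare strictly better than `min {m, n}`, with `k = max {m, n}`. On the
profile where bidders `1` and `2` both have the additive valuation valuing item `e_1` at
`3k⁴` (and `0` elsewhere) and each other bidder `i` values only `e_i` at `1`, bidder `1`
either wins a bundle not containing `e_1` and pays `0`, or wins a bundle containing `e_1`
and pays at least `2k³ + k²`. -/
theorem additive_competition_on_e1
    (m n : ℕ) (hm : 2 ≤ m) (hn : 2 ≤ n)
    (f : (Fin n → Fin m → NNReal) → Fin n → Finset (Fin m))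
    (P1 : (Fin n → Fin m → NNReal) → ℝ)
    (k : ℕ) (hk : k = max m n)
    (c : ℝ) (hc0 : 0 < c) (hc : c < min (m : ℝ) n)
    (i0 : Fin n) (hi0 : i0 = ⟨0, by omega⟩) (i1 : Fin n) (hi1 : i1 = ⟨1, by omega⟩)
    (e0 : Fin m) (he0 : e0 = ⟨0, by omega⟩)
    -- feasibility: the allocation is pairwise disjoint
    (hfeas : ∀ (v : Fin n → Fin m → NNReal) (i j : Fin n), i ≠ j →
      Disjoint (f v i) (f v j))
    -- dominant-strategy incentive compatibility for bidder 1
    (hDSIC : ∀ (v : Fin n → Fin m → NNReal) (d' : Fin m → NNReal),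
      addVal (v i0) (f v i0) - P1 v ≥
        addVal (v i0) (f (Function.update v i0 d') i0) - P1 (Function.update v i0 d'))
    -- individual rationality for bidder 1
    (hIR : ∀ v : Fin n → Fin m → NNReal, 0 ≤ addVal (v i0) (f v i0) - P1 v)
    -- no-negative-transfers for bidder 1
    (hNNT : ∀ v : Fin n → Fin m → NNReal, 0 ≤ P1 v)
    -- c-approximation of the optimal welfare
    (happrox : ∀ (v : Fin n → Fin m → NNReal) (a : Fin n → Finset (Fin m)),
      (∀ i j : Fin n, i ≠ j → Disjoint (a i) (a j)) →
      (∑ j, addVal (v j) (a j)) ≤ c * ∑ j, addVal (v j) (f v j))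
    (vbig : Fin m → NNReal)
    (hvbig : vbig = fun x => if x = e0 then 3 * (k : NNReal) ^ 4 else 0)
    (v : Fin n → Fin m → NNReal)
    (hv : v = fun j => if j = i0 then vbig else if j = i1 then vbig
      else oneVal (eIdx m (by omega) j)) :
    (e0 ∉ f v i0 ∧ P1 v = 0) ∨
      (e0 ∈ f v i0 ∧ 2 * (k : ℝ) ^ 3 + (k : ℝ) ^ 2 ≤ P1 v) := by
  have hk2 : 2 ≤ k := by omega
  have hi10 : i1 ≠ i0 := by simp [hi0, hi1, Fin.ext_iff]
  have hvi0 : v i0 = vbig := by simp [hv]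
  have hvi1 : v i1 = vbig := by simp [hv, hi10]
  have hkR : (2 : ℝ) ≤ (k : ℝ) := by exact_mod_cast hk2
  have hnk : (n : ℝ) ≤ (k : ℝ) := by exact_mod_cast (by omega : n ≤ k)
  by_cases he : e0 ∈ f v i0
  · right
    refine ⟨he, ?_⟩
    set C : NNReal := 2 * (k : NNReal) ^ 3 + (k : NNReal) ^ 2 with hC
    have hCcast : (C : ℝ) = 2 * (k : ℝ) ^ 3 + (k : ℝ) ^ 2 := by
      rw [hC]; push_cast; ring
    set d' : Fin m → NNReal := fun x => if x = e0 then C else 0 with hd'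
    set v' := Function.update v i0 d' with hv'def
    have hv'i0 : v' i0 = d' := Function.update_self _ _ _
    have hv'i1 : v' i1 = vbig := by
      rw [hv'def, Function.update_of_ne hi10, hvi1]
    -- claim: bidder i0 does not win e0 on the deviated profile
    have hclaim : e0 ∉ f v' i0 := by
      intro habs
      set a : Fin n → Finset (Fin m) := fun j => if j = i1 then {e0} else ∅ with ha
      have hadisj : ∀ i j : Fin n, i ≠ j → Disjoint (a i) (a j) := by
        intro i j hij
        by_cases h1 : i = i1
        · have h2 : j ≠ i1 := fun h => hij (h1.trans h.symm)
          simp only [ha, h1, if_pos, h2, if_neg, not_false_iff]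
          exact Finset.disjoint_empty_right _
        · simp only [ha, h1, if_neg, not_false_iff]
          exact Finset.disjoint_empty_left _
      have h1 := happrox v' a hadisj
      have hL : (∑ j, addVal (v' j) (a j)) = 3 * (k : ℝ) ^ 4 := by
        rw [Finset.sum_eq_single i1]
        · rw [hv'i1, ha, hvbig]
          simp [addVal_single]
        · intro b _ hb
          simp [ha, hb, addVal]
        · simp
      -- bound each term of the achieved welfare
      have hterm : ∀ j : Fin n, addVal (v' j) (f v' j) ≤
          (1 : ℝ) + (if j = i0 then (C : ℝ) else 0) := by
        intro j
        by_cases hj0 : j = i0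
        · subst hj0
          rw [hv'i0, hd', addVal_single]
          split <;> simp [hCcast] <;> positivity
        · rw [if_neg hj0, add_zero]
          by_cases hj1 : j = i1
          · have hdisj := hfeas v' i0 i1 (Ne.symm hi10)
            have hne : e0 ∉ f v' i1 := fun h => (Finset.disjoint_left.mp hdisj habs) h
            rw [hj1, hv'i1, hvbig, addVal_single, if_neg hne]
            norm_num
          · have : v' j = oneVal (eIdx m (by omega) j) := by
              rw [hv'def, Function.update_of_ne hj0, hv]
              simp [hj0, hj1]
            rw [this]
            exact addVal_oneVal_le _ _
      have hR : (∑ j, addVal (v' j) (f v' j)) ≤ (n : ℝ) + (C : ℝ) := by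
        calc (∑ j, addVal (v' j) (f v' j))
            ≤ ∑ j : Fin n, ((1 : ℝ) + (if j = i0 then (C : ℝ) else 0)) :=
              Finset.sum_le_sum fun j _ => hterm j
          _ = (n : ℝ) + (C : ℝ) := by
              rw [Finset.sum_add_distrib, Finset.sum_ite_eq' Finset.univ i0]
              simp
      have hRnn : 0 ≤ ∑ j, addVal (v' j) (f v' j) :=
        Finset.sum_nonneg fun j _ => addVal_nonneg _ _
      have hck : c ≤ (k : ℝ) := by
        have : c < (n : ℝ) := lt_of_lt_of_le hc (min_le_right _ _)
        linarith
      have : 3 * (k : ℝ) ^ 4 ≤ (k : ℝ) * ((n : ℝ) + (C : ℝ)) := by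
        calc 3 * (k : ℝ) ^ 4 = ∑ j, addVal (v' j) (a j) := hL.symm
          _ ≤ c * ∑ j, addVal (v' j) (f v' j) := h1
          _ ≤ (k : ℝ) * ∑ j, addVal (v' j) (f v' j) :=
              mul_le_mul_of_nonneg_right hck hRnn
          _ ≤ (k : ℝ) * ((n : ℝ) + (C : ℝ)) := by
              apply mul_le_mul_of_nonneg_left hR; linarith
      rw [hCcast] at this
      nlinarith [sq_nonneg ((k : ℝ) - 2), sq_nonneg (k : ℝ)]
    -- apply DSIC at the deviated profile, deviating back to vbig
    have hupd : Function.update v' i0 vbig = v := by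
      funext j
      by_cases hj : j = i0
      · subst hj; rw [Function.update_self, hvi0]
      · rw [Function.update_of_ne hj, hv'def, Function.update_of_ne hj]
    have hD := hDSIC v' vbig
    rw [hupd, hv'i0] at hD
    have hA0 : addVal d' (f v' i0) = 0 := by
      rw [hd', addVal_single, if_neg hclaim]
    have hAC : addVal d' (f v i0) = (C : ℝ) := by
      rw [hd', addVal_single, if_pos he]
    rw [hA0, hAC] at hD
    have hN := hNNT v'
    rw [← hCcast]
    linarith
  · left
    refine ⟨he, ?_⟩
    have hIR' := hIR v
    have hA : addVal (v i0) (f v i0) = 0 := by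
      rw [hvi0, hvbig, addVal_single, if_neg he]
    have hN := hNNT v
    linarith [hIR', hA.symm ▸ hIR']
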